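/- Let M be a finite paving matroid on a ground set S of rank r ≥ 2, and let X ⊆ S with |X| = r + 1 be such that X = C ∪ B for some circuit C of M with |C| = r and some basis B of M. Then there is exactly one circuit of M of cardinality r contained in X. -/

import Mathlib

/-! Since `|B| = r` and `|X| = r + 1`, the set `X` is a base with one element `e` added, and a
base plus one element contains only one circuit, the fundamental circuit of `e`. -/

open Set

namespace Matroid

variable {α : Type*}

/-- A circuit of a matroid: a minimal dependent set. -/
def Circuit' (M : Matroid α) (C : Set α) : Prop :=
  M.Dep C ∧ ∀ D, D ⊂ C → M.Indep D

/-- The rank of a subset `X`: the maximum cardinality of an independent subset of `X`. -/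
noncomputable def rk' (M : Matroid α) (X : Set α) : ℕ :=
  sSup {n | ∃ I, I ⊆ X ∧ M.Indep I ∧ I.ncard = n}

/-- A hyperplane of a matroid of rank `r`: a maximal subset of the ground set of rank `r - 1`. -/
def Hyperplane' (M : Matroid α) (H : Set α) : Prop :=
  H ⊆ M.E ∧ M.rk' H = M.rk' M.E - 1 ∧
    ∀ Y, H ⊂ Y → Y ⊆ M.E → M.rk' Y ≠ M.rk' M.E - 1

/-- A matroid is paving if it has no circuits of cardinality less than its rank. -/
def Paving (M : Matroid α) : Prop :=
  ∀ C, M.Circuit' C → M.rk' M.E ≤ C.ncard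

/-- A matroid is sparse-paving if both it and its dual are paving. -/
def SparsePaving (M : Matroid α) : Prop :=
  M.Paving ∧ M✶.Paving

lemma circuit'_iff_isCircuit {M : Matroid α} {C : Set α} : M.Circuit' C ↔ M.IsCircuit C := by
  rw [isCircuit_iff_forall_ssubset]
  exact Iff.rfl

lemma IsBase.rk'_ground_eq_ncard {M : Matroid α} [M.RankFinite] {B : Set α} (hB : M.IsBase B) :
    M.rk' M.E = B.ncard := by
  have hbdd : ∀ n ∈ {n | ∃ I, I ⊆ M.E ∧ M.Indep I ∧ I.ncard = n}, n ≤ B.ncard := by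
    rintro n ⟨I, -, hI, rfl⟩
    obtain ⟨B', hB', hIB'⟩ := hI.exists_isBase_superset
    calc I.ncard ≤ B'.ncard := ncard_le_ncard hIB' hB'.finite
      _ = B.ncard := hB'.ncard_eq_ncard_of_isBase hB
  exact le_antisymm (csSup_le' hbdd) (le_csSup ⟨B.ncard, hbdd⟩ ⟨B, hB.subset_ground, hB.indep, rfl⟩)

lemma IsCircuit.eq_of_subset_insert {M : Matroid α} {C D I : Set α} {e : α}
    (hC : M.IsCircuit C) (hD : M.IsCircuit D) (hI : M.Indep I)
    (hCI : C ⊆ insert e I) (hDI : D ⊆ insert e I) : C = D :=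
  (hC.eq_fundCircuit_of_subset hI hCI).trans (hD.eq_fundCircuit_of_subset hI hDI).symm

end Matroid

theorem stmt12_general {α : Type*} (M : Matroid α) [M.Finite] (r : ℕ)
    (hrank : M.rk' M.E = r)
    (X : Set α) (hX : X.ncard = r + 1)
    (hCB : ∃ C B, M.Circuit' C ∧ C.ncard = r ∧ M.IsBase B ∧ X = C ∪ B) :
    ∃! C, M.Circuit' C ∧ C.ncard = r ∧ C ⊆ X := by
  obtain ⟨C, B, hC, hCr, hB, rfl⟩ := hCB
  have hBr : B.ncard = r := hrank ▸ hB.rk'_ground_eq_ncard.symm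
  obtain ⟨e, -, hCB⟩ : ∃ e ∉ B, insert e B = C ∪ B :=
    (exists_eq_insert_iff_ncard hB.finite).2 ⟨subset_union_right, by rw [hBr, hX]⟩
  refine ⟨C, ⟨hC, hCr, subset_union_left⟩, fun D ⟨hD, _, hDX⟩ ↦ ?_⟩
  rw [← hCB] at hDX
  exact (Matroid.circuit'_iff_isCircuit.1 hD).eq_of_subset_insert
    (Matroid.circuit'_iff_isCircuit.1 hC) hB.indep hDX (hCB ▸ subset_union_left)

theorem stmt12 {α : Type*} (M : Matroid α) [M.Finite] (r : ℕ)
    (hr : 2 ≤ r) (hrank : M.rk' M.E = r) (hpav : M.Paving)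
    (X : Set α) (hXE : X ⊆ M.E) (hX : X.ncard = r + 1)
    (hCB : ∃ C B, M.Circuit' C ∧ C.ncard = r ∧ M.IsBase B ∧ X = C ∪ B) :
    ∃! C, M.Circuit' C ∧ C.ncard = r ∧ C ⊆ X :=
  stmt12_general M r hrank X hX hCB
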